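/- arXiv:2209.04789 — 2 statements merged into one kernel-verified Lean document; each statement's English description precedes it below -/
import Mathlib

section
/- In the finite-horizon inventory problem with convex stage cost, for each stage k there exists a threshold M^k, independent of the current inventory x, such that the optimal order quantity is N^{k,*}(x) = clamp((M^k - x)₊, x^L + D^k - x, x^U - x), where clamp(u, a, b) = min(b, max(u, a)). In particular, when the bound constraints are inactive, the optimal policy is the base-stock policy N^{k,*}(x) = (M^k - x)₊. -/
/-- Existence of a threshold (base-stock) policy with inventory bounds: if the
state-action cost `Q` is convex with unconstrained minimizer `M₀`, then there is a
threshold `M`, independent of the current inventory `x`, such that the order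
`N* = clamp((M - x)₊, xL + D - x, xU - x)` is optimal among feasible orders; moreover
when the bound constraints are inactive the policy reduces to `N* = (M - x)₊`. -/
theorem threshold_policy_exists
    (Q : ℝ → ℝ) (hQ : ConvexOn ℝ Set.univ Q)
    (M₀ : ℝ) (hM₀ : ∀ y, Q M₀ ≤ Q y)
    (xL xU D : ℝ) (hbounds : xL + D ≤ xU) :
    ∃ M : ℝ, ∀ x : ℝ, x ≤ xU →
      (∀ N : ℝ, 0 ≤ N → xL + D ≤ x + N → x + N ≤ xU →
        Q (x + min (xU - x) (max (max (M - x) 0) (xL + D - x))) ≤ Q (x + N)) ∧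
      (xL + D - x ≤ max (M - x) 0 → max (M - x) 0 ≤ xU - x →
        min (xU - x) (max (max (M - x) 0) (xL + D - x)) = max (M - x) 0) := by
  refine ⟨M₀, fun x hxU => ⟨fun N hN0 hNL hNU => ?_, fun h1 h2 => ?_⟩⟩
  · set y := x + N with hy
    have hxy : x ≤ y := by simp [hy]; linarith
    have hz : x + min (xU - x) (max (max (M₀ - x) 0) (xL + D - x))
        = min xU (max (max M₀ x) (xL + D)) := by
      simp only [min_def, max_def]
      split_ifs <;> ring_nf <;> linarith
    rw [hz]
    set z := min xU (max (max M₀ x) (xL + D)) with hzdef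
    have hz1 : min M₀ y ≤ z := by
      apply le_min
      · exact (min_le_right M₀ y).trans hNU
      · exact (min_le_left M₀ y).trans ((le_max_left M₀ x).trans (le_max_left _ _))
    have hz2 : z ≤ max M₀ y := by
      refine (min_le_right _ _).trans (max_le (max_le (le_max_left _ _)
        (hxy.trans (le_max_right _ _))) (hNL.trans (le_max_right _ _)))
    have hseg : z ∈ segment ℝ M₀ y := by
      rw [segment_eq_uIcc]; exact ⟨hz1, hz2⟩
    have := hQ.le_on_segment (Set.mem_univ M₀) (Set.mem_univ y) hseg
    calc Q z ≤ max (Q M₀) (Q y) := this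
      _ = Q y := max_eq_right (hM₀ y)
  · rw [max_eq_left h1, min_eq_right h2]
end

section
/- Let ω be an integrable random variable and f(u) = s·(-u)₊ + h·u₊ with s, h > 0. Then G(y) = E[f(y - ω)] is differentiable at every y where P(ω = y) = 0, with G'(y) = -s·P(ω > y) + h·P(ω ≤ y) = -s + (s+h)·P(ω ≤ y). -/
/-!
For fixed `ω`, the integrand `x ↦ f (x - ω)` is Lipschitz with a constant independent of `ω`, and
it is differentiable at `y` unless `ω = y`, with derivative `-s` when `ω > y` and `h` when
`ω < y`. As `{ω = y}` is null, dominated differentiation under the integral gives `G' y` as the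
expectation of that derivative.
-/

open MeasureTheory
open scoped NNReal

theorem lipschitzWith_penalty (s h : ℝ) :
    LipschitzWith (‖s‖₊ + ‖h‖₊) fun u : ℝ => s * max (-u) 0 + h * max u 0 := by
  simpa using ((lipschitzWith_smul s).comp (LipschitzWith.id.neg.max_const 0)).add
    ((lipschitzWith_smul h).comp (LipschitzWith.id.max_const 0))

theorem hasDerivAt_penalty (s h : ℝ) {u : ℝ} (hu : u ≠ 0) :
    HasDerivAt (fun u : ℝ => s * max (-u) 0 + h * max u 0) (if u < 0 then -s else h) u := by
  rcases hu.lt_or_gt with hneg | hpos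
  · rw [if_pos hneg]
    have hlin : HasDerivAt (fun u : ℝ => s * -u) (-s) u := by
      simpa using ((hasDerivAt_id u).neg).const_mul s
    refine hlin.congr_of_eventuallyEq ?_
    filter_upwards [eventually_lt_nhds hneg] with v hv
    simp [max_eq_left (neg_nonneg.2 hv.le), max_eq_right hv.le]
  · rw [if_neg hpos.not_gt]
    have hlin : HasDerivAt (fun u : ℝ => h * u) h u := by
      simpa using (hasDerivAt_id u).const_mul h
    refine hlin.congr_of_eventuallyEq ?_
    filter_upwards [eventually_gt_nhds hpos] with v hv
    simp [max_eq_right (neg_nonpos.2 hv.le), max_eq_left hv.le]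

section

variable {Ω : Type*} [MeasurableSpace Ω] {μ : Measure Ω} [IsFiniteMeasure μ]

theorem integral_ite_lt {X : Ω → ℝ} (hX : AEMeasurable X μ) (y c d : ℝ) :
    ∫ a, (if y < X a then c else d) ∂μ = c * μ.real {a | y < X a} + d * μ.real {a | X a ≤ y} := by
  have hlt : NullMeasurableSet {a | y < X a} μ := nullMeasurableSet_lt aemeasurable_const hX
  have hle : NullMeasurableSet {a | X a ≤ y} μ := nullMeasurableSet_le hX aemeasurable_const
  have hsplit : (fun a => if y < X a then c else d) =
      fun a => {a | y < X a}.indicator (fun _ => c) a + {a | X a ≤ y}.indicator (fun _ => d) a := by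
    ext a
    by_cases ha : y < X a <;> simp [Set.indicator_apply, ha]
  rw [hsplit, integral_add ((integrable_const c).indicator₀ hlt) ((integrable_const d).indicator₀ hle),
    integral_indicator₀ hlt, integral_indicator₀ hle, setIntegral_const, setIntegral_const]
  simp [mul_comm]

theorem LipschitzWith.integrable_comp_const_sub {f : ℝ → ℝ} {K : ℝ≥0} (hf : LipschitzWith K f)
    {X : Ω → ℝ} (hX : Integrable X μ) (y : ℝ) : Integrable (fun a => f (y - X a)) μ := by
  refine ((integrable_const (‖f 0‖ + K * ‖y‖)).add (hX.norm.const_mul K)).mono'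
    (hf.continuous.comp_aestronglyMeasurable (aestronglyMeasurable_const.sub hX.1)) ?_
  filter_upwards with a
  calc ‖f (y - X a)‖ ≤ ‖f 0‖ + ‖f (y - X a) - f 0‖ := norm_le_norm_add_norm_sub' _ _
    _ ≤ ‖f 0‖ + K * ‖y - X a‖ := by
      simpa only [dist_eq_norm, sub_zero, add_le_add_iff_left] using hf.dist_le_mul (y - X a) 0
    _ ≤ ‖f 0‖ + K * (‖y‖ + ‖X a‖) := by gcongr; exact _root_.norm_sub_le _ _
    _ = ‖f 0‖ + K * ‖y‖ + K * ‖X a‖ := by ring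

theorem hasDerivAt_integral_comp_sub {f f' : ℝ → ℝ} {K : ℝ≥0} (hf : LipschitzWith K f)
    (hf' : Measurable f') {X : Ω → ℝ} (hX : Integrable X μ) {y : ℝ}
    (hderiv : ∀ᵐ a ∂μ, HasDerivAt f (f' (y - X a)) (y - X a)) :
    HasDerivAt (fun x => ∫ a, f (x - X a) ∂μ) (∫ a, f' (y - X a) ∂μ) y := by
  have hmeas (x : ℝ) : AEStronglyMeasurable (fun a => f (x - X a)) μ :=
    hf.continuous.comp_aestronglyMeasurable (aestronglyMeasurable_const.sub hX.1)
  have hlip (c : ℝ) : LipschitzWith K fun x => f (x - c) :=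
    LipschitzWith.of_dist_le_mul fun x x' => by
      simpa only [dist_sub_right] using hf.dist_le_mul (x - c) (x' - c)
  refine (hasDerivAt_integral_of_dominated_loc_of_lip (bound := fun _ => (K : ℝ)) Filter.univ_mem
    (.of_forall hmeas) (hf.integrable_comp_const_sub hX y)
    (hf'.comp_aemeasurable (aemeasurable_const.sub hX.aemeasurable)).aestronglyMeasurable
    (.of_forall fun a => ?_) (integrable_const _)
    (hderiv.mono fun a ha => ha.comp_sub_const y (X a))).2
  simpa only [Real.nnabs_coe] using (hlip (X a)).lipschitzOnWith

end

theorem expected_penalty_deriv_general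
    {Ωs : Type*} [MeasurableSpace Ωs] (μ : Measure Ωs) [IsProbabilityMeasure μ]
    (ω : Ωs → ℝ) (hω : Integrable ω μ)
    (s h : ℝ)
    (f : ℝ → ℝ) (hf : ∀ u, f u = s * max (-u) 0 + h * max u 0)
    (G : ℝ → ℝ) (hG : ∀ y, G y = ∫ a, f (y - ω a) ∂μ)
    (y : ℝ) (hy : μ {a | ω a = y} = 0) :
    HasDerivAt G (-s * (μ {a | y < ω a}).toReal + h * (μ {a | ω a ≤ y}).toReal) y ∧
    -s * (μ {a | y < ω a}).toReal + h * (μ {a | ω a ≤ y}).toReal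
      = -s + (s + h) * (μ {a | ω a ≤ y}).toReal := by
  obtain rfl : G = fun x => ∫ a, f (x - ω a) ∂μ := funext hG
  obtain rfl : f = fun u => s * max (-u) 0 + h * max u 0 := funext hf
  have hderiv : ∀ᵐ a ∂μ, HasDerivAt (fun u => s * max (-u) 0 + h * max u 0)
      (if y - ω a < 0 then -s else h) (y - ω a) := by
    filter_upwards [measure_eq_zero_iff_ae_notMem.1 hy] with a ha
    exact hasDerivAt_penalty s h (sub_ne_zero.2 (Ne.symm ha))
  have hG' := hasDerivAt_integral_comp_sub (lipschitzWith_penalty s h)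
    (Measurable.ite measurableSet_Iio measurable_const measurable_const) hω hderiv
  simp only [sub_neg, integral_ite_lt hω.aemeasurable] at hG'
  refine ⟨hG', ?_⟩
  have htotal : (μ {a | y < ω a}).toReal + (μ {a | ω a ≤ y}).toReal = 1 := by
    simpa [← measureReal_def, Set.compl_ofPred, not_lt] using
      measureReal_add_measureReal_compl₀ (nullMeasurableSet_lt aemeasurable_const hω.aemeasurable)
  linear_combination -s * htotal

/-- Differentiability of the expected holding/shortage cost: with
`f u = s·(-u)₊ + h·u₊` and `G y = E[f (y - ω)]`, at every `y` with `P(ω = y) = 0`,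
`G` is differentiable with `G' y = -s·P(ω > y) + h·P(ω ≤ y) = -s + (s+h)·P(ω ≤ y)`. -/
theorem expected_penalty_deriv
    {Ωs : Type*} [MeasurableSpace Ωs] (μ : Measure Ωs) [IsProbabilityMeasure μ]
    (ω : Ωs → ℝ) (hω : Integrable ω μ)
    (s h : ℝ) (hs : 0 < s) (hh : 0 < h)
    (f : ℝ → ℝ) (hf : ∀ u, f u = s * max (-u) 0 + h * max u 0)
    (G : ℝ → ℝ) (hG : ∀ y, G y = ∫ a, f (y - ω a) ∂μ)
    (y : ℝ) (hy : μ {a | ω a = y} = 0) :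
    HasDerivAt G (-s * (μ {a | y < ω a}).toReal + h * (μ {a | ω a ≤ y}).toReal) y ∧
    -s * (μ {a | y < ω a}).toReal + h * (μ {a | ω a ≤ y}).toReal
      = -s + (s + h) * (μ {a | ω a ≤ y}).toReal :=
  expected_penalty_deriv_general μ ω hω s h f hf G hG y hy
end
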